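/- Define f(τ) := Γ(2α−τ) · Γ(τ+1) · sin(π(α−τ)) for real τ. Suppose one of the following holds: (a) 0 < α < 1/2 and 0 < τ < α; (b) 0 < α < 1 and 2α < τ < 1+α; (c) 0 < α < 1/2 and 1+2α < τ < 2. Then f(τ) > 0 and the derivative of f at τ is strictly negative. -/

import Mathlib

/-!
By the reflection formula, `f(τ) = π R(x) R(1 - x)` with `x = α - τ` and `R(z) = Γ(z + α) / Γ(z)`,
so `f'(τ) / f(τ) = D(1 - x) - D(x)` for `D(z) = ψ(z + α) - ψ(z)`. For `z > 0`,
`D(z) = ∑ₖ ((z + k)⁻¹ - (z + k + α)⁻¹)` is strictly decreasing. In cases (b) and (c) `x` is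
negative, but `x` and `x + α` lie in one unit cell `(-n, 1 - n)` (`n = 1, 2`); there `Γ(x)` and
`Γ(x + α)` have the same sign, and `ψ(z + 1) = ψ(z) + z⁻¹` gives `D(x) > D(x + 1) > ⋯ > D(x + n)`,
while `x + n < 1 - x`.
-/

open Real Filter Set Topology

local notation "ψ" => logDeriv Real.Gamma

theorem differentiableAt_Gamma_of_ne_zero {x : ℝ} (hx : Gamma x ≠ 0) :
    DifferentiableAt ℝ Gamma x :=
  differentiableAt_Gamma fun m hm => hx ((Gamma_eq_zero_iff x).2 ⟨m, hm⟩)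

theorem digamma_add_one {x : ℝ} (hx : Gamma x ≠ 0) : ψ (x + 1) = ψ x + x⁻¹ := by
  have hx₀ : x ≠ 0 := by rintro rfl; simp at hx
  have hΓ := differentiableAt_Gamma_of_ne_zero hx
  have hshift : (fun z => Gamma (z + 1)) =ᶠ[𝓝 x] fun z => z * Gamma z := by
    filter_upwards [eventually_ne_nhds hx₀] with z hz using Gamma_add_one hz
  calc ψ (x + 1) = logDeriv (fun z => Gamma (z + 1)) x := by
        rw [logDeriv_apply, logDeriv_apply, deriv_comp_add_const]
    _ = logDeriv (fun z => z * Gamma z) x := (logDeriv_congr_nhds hshift).eq_of_nhds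
    _ = ψ x + x⁻¹ := by
        rw [logDeriv_mul (f := fun z => z) x hx₀ hx differentiableAt_fun_id hΓ, logDeriv_id',
          one_div, add_comm]

theorem digamma_add_nat {x : ℝ} (hx : 0 < x) (n : ℕ) :
    ψ (x + n) = ψ x + ∑ k ∈ Finset.range n, (x + k)⁻¹ := by
  induction n with
  | zero => simp
  | succ n ih =>
    rw [Nat.cast_succ, ← add_assoc, digamma_add_one (Gamma_pos_of_pos (by positivity)).ne', ih,
      Finset.sum_range_succ, add_assoc]

theorem hasDerivAt_log_Gamma {x : ℝ} (hx : 0 < x) :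
    HasDerivAt (fun t => log (Gamma t)) (ψ x) x :=
  (differentiableAt_Gamma_of_ne_zero (Gamma_pos_of_pos hx).ne').hasDerivAt.log
    (Gamma_pos_of_pos hx).ne'

theorem slope_log_Gamma_add_one {x : ℝ} (hx : 0 < x) : slope (log ∘ Gamma) x (x + 1) = log x := by
  rw [slope_def_field, Function.comp_apply, Function.comp_apply, Gamma_add_one hx.ne',
    log_mul hx.ne' (Gamma_pos_of_pos hx).ne']
  simp

theorem digamma_le_log {x : ℝ} (hx : 0 < x) : ψ x ≤ log x :=
  slope_log_Gamma_add_one hx ▸ convexOn_log_Gamma.le_slope_of_hasDerivAt hx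
    (mem_Ioi.2 (by linarith)) (lt_add_one x) (hasDerivAt_log_Gamma hx)

theorem log_sub_one_le_digamma {x : ℝ} (hx : 1 < x) : log (x - 1) ≤ ψ x := by
  have h := convexOn_log_Gamma.slope_le_of_hasDerivAt (x := x - 1)
    (mem_Ioi.2 (by linarith)) (mem_Ioi.2 (by linarith)) (sub_one_lt x)
    (hasDerivAt_log_Gamma (by linarith))
  rwa [← slope_log_Gamma_add_one (by linarith), sub_add_cancel]

theorem tendsto_digamma_sub_log : Tendsto (fun x => ψ x - log x) atTop (𝓝 0) := by
  refine tendsto_of_tendsto_of_tendsto_of_le_of_le' (tendsto_log_comp_add_sub_log (-1))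
    tendsto_const_nhds ?_ ?_
  · filter_upwards [eventually_gt_atTop 1] with x hx
    simpa [← sub_eq_add_neg] using log_sub_one_le_digamma hx
  · filter_upwards [eventually_gt_atTop 0] with x hx
    simpa using digamma_le_log hx

theorem tendsto_digamma_add_sub_digamma (h : ℝ) :
    Tendsto (fun x => ψ (x + h) - ψ x) atTop (𝓝 0) := by
  have := ((tendsto_digamma_sub_log.comp (tendsto_atTop_add_const_right _ h tendsto_id)).sub
    tendsto_digamma_sub_log).add (tendsto_log_comp_add_sub_log h)
  simp only [sub_self, add_zero] at this
  refine this.congr fun x => ?_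
  simp only [Function.comp_apply, id]
  ring

theorem inv_sub_inv_add_lt {h x y : ℝ} (hh : 0 < h) (hx : 0 < x) (hxy : x < y) :
    y⁻¹ - (y + h)⁻¹ < x⁻¹ - (x + h)⁻¹ := by
  have hy : 0 < y := hx.trans hxy
  rw [inv_sub_inv hy.ne' (by positivity), inv_sub_inv hx.ne' (by positivity),
    add_sub_cancel_left, add_sub_cancel_left]
  apply div_lt_div_of_pos_left (by linarith) (by positivity)
  nlinarith

theorem hasSum_digamma_add_sub_digamma {h x : ℝ} (hh : 0 ≤ h) (hx : 0 < x) :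
    HasSum (fun k : ℕ => (x + k)⁻¹ - (x + k + h)⁻¹) (ψ (x + h) - ψ x) := by
  refine (hasSum_iff_tendsto_nat_of_nonneg (fun k => ?_) _).2 ?_
  · exact sub_nonneg.2 (inv_anti₀ (by positivity) (by linarith))
  · have hlim := tendsto_const_nhds (x := ψ (x + h) - ψ x) |>.sub
      ((tendsto_digamma_add_sub_digamma h).comp
        (tendsto_atTop_add_const_left _ x tendsto_natCast_atTop_atTop))
    rw [sub_zero] at hlim
    refine hlim.congr fun n => ?_
    simp only [Function.comp_apply, Finset.sum_sub_distrib]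
    rw [add_right_comm, digamma_add_nat (by positivity), digamma_add_nat hx]
    simp only [add_right_comm x _ h]
    ring

theorem strictAntiOn_digamma_add_sub_digamma {h : ℝ} (hh : 0 < h) :
    StrictAntiOn (fun x => ψ (x + h) - ψ x) (Ioi 0) := fun x hx y hy hxy =>
  hasSum_lt (i := 0)
    (fun k => (inv_sub_inv_add_lt hh (add_pos_of_pos_of_nonneg hx k.cast_nonneg)
      (add_lt_add_left hxy _)).le)
    (by simpa using inv_sub_inv_add_lt hh hx hxy)
    (hasSum_digamma_add_sub_digamma hh.le hy) (hasSum_digamma_add_sub_digamma hh.le hx)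

noncomputable def gammaRatio (h x : ℝ) : ℝ := Gamma (x + h) / Gamma x

theorem gammaRatio_pos_of_pos {h x : ℝ} (hh : 0 ≤ h) (hx : 0 < x) : 0 < gammaRatio h x :=
  div_pos (Gamma_pos_of_pos (by linarith)) (Gamma_pos_of_pos hx)

theorem gammaRatio_add_one {h x : ℝ} (hx : x ≠ 0) (hxh : x + h ≠ 0) :
    gammaRatio h (x + 1) = (x + h) / x * gammaRatio h x := by
  rw [gammaRatio, gammaRatio, add_right_comm, Gamma_add_one hx, Gamma_add_one hxh]
  field_simp

theorem hasDerivAt_gammaRatio {h x : ℝ} (hx : gammaRatio h x ≠ 0) :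
    HasDerivAt (gammaRatio h) (gammaRatio h x * (ψ (x + h) - ψ x)) x := by
  obtain ⟨hΓxh, hΓx⟩ := div_ne_zero_iff.1 hx
  have hd := (differentiableAt_Gamma_of_ne_zero hΓxh).hasDerivAt.comp_add_const x h |>.div
    (differentiableAt_Gamma_of_ne_zero hΓx).hasDerivAt hΓx
  refine hd.congr_deriv ?_
  rw [gammaRatio, logDeriv_apply, logDeriv_apply]
  field_simp

/-- `x` and `x + h` lie in the unit cell `(-n, 1 - n)`, on which `Gamma` has constant sign. -/
theorem gammaRatio_pos {h x : ℝ} (hh : 0 ≤ h) (n : ℕ) (hx : 0 < x + n) (hxh : x + h + n < 1) :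
    0 < gammaRatio h x := by
  induction n generalizing x with
  | zero => simpa using gammaRatio_pos_of_pos hh (by simpa using hx)
  | succ n ih =>
    push_cast at hx hxh
    have hR := ih (x := x + 1) (by linarith) (by linarith)
    have hxh₀ : x + h < 0 := by linarith [n.cast_nonneg (α := ℝ)]
    rw [gammaRatio_add_one (by linarith) hxh₀.ne] at hR
    exact pos_of_mul_pos_right hR (div_pos_of_neg_of_neg hxh₀ (by linarith)).le

theorem digamma_add_sub_digamma_lt {h x y : ℝ} (hh : 0 < h) (n : ℕ) (hx : 0 < x + n)
    (hxh : x + h + n < 1) (hxy : x + n < y) :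
    ψ (y + h) - ψ y < ψ (x + h) - ψ x := by
  induction n generalizing x with
  | zero =>
    simp only [Nat.cast_zero, add_zero] at hx hxy
    exact strictAntiOn_digamma_add_sub_digamma hh hx (hx.trans hxy) hxy
  | succ n ih =>
    push_cast at hx hxh hxy
    have hlt := ih (x := x + 1) (by linarith) (by linarith) (by linarith)
    have hxh₀ : x + h < 0 := by linarith [n.cast_nonneg (α := ℝ)]
    obtain ⟨hΓxh, hΓx⟩ :=
      div_ne_zero_iff.1 (gammaRatio_pos (x := x) hh.le (n + 1) (by push_cast; linarith)
        (by push_cast; linarith)).ne'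
    rw [add_right_comm, digamma_add_one hΓxh, digamma_add_one hΓx] at hlt
    have := (inv_lt_inv_of_neg hxh₀ (by linarith)).2 (by linarith : x < x + h)
    linarith

theorem sin_pi_mul_eq_pi_div {s : ℝ} (hs : Gamma s * Gamma (1 - s) ≠ 0) :
    sin (π * s) = π / (Gamma s * Gamma (1 - s)) := by
  have hsin : sin (π * s) ≠ 0 := fun h0 => hs (by rw [Gamma_mul_Gamma_one_sub, h0, div_zero])
  rw [Gamma_mul_Gamma_one_sub, div_div_cancel₀ pi_ne_zero]

theorem Gamma_add_mul_Gamma_one_sub_add_mul_sin {h s : ℝ} (hs : Gamma s * Gamma (1 - s) ≠ 0) :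
    Gamma (s + h) * Gamma (1 - s + h) * sin (π * s) = π * gammaRatio h s * gammaRatio h (1 - s) := by
  rw [sin_pi_mul_eq_pi_div hs, gammaRatio, gammaRatio]
  field_simp

theorem hasDerivAt_Gamma_mul_Gamma_mul_sin {h s : ℝ} (h₁ : gammaRatio h s ≠ 0)
    (h₂ : gammaRatio h (1 - s) ≠ 0) :
    HasDerivAt (fun s => Gamma (s + h) * Gamma (1 - s + h) * sin (π * s))
      (π * gammaRatio h s * gammaRatio h (1 - s) *
        (ψ (s + h) - ψ s - (ψ (1 - s + h) - ψ (1 - s)))) s := by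
  have hΓ₁ := (div_ne_zero_iff.1 h₁).2
  have hΓ₂ := (div_ne_zero_iff.1 h₂).2
  have hcont : ContinuousAt (fun s => Gamma s * Gamma (1 - s)) s :=
    (differentiableAt_Gamma_of_ne_zero hΓ₁).continuousAt.mul
      ((differentiableAt_Gamma_of_ne_zero hΓ₂).continuousAt.comp (by fun_prop))
  have heq : (fun s => Gamma (s + h) * Gamma (1 - s + h) * sin (π * s)) =ᶠ[𝓝 s]
      fun s => π * gammaRatio h s * gammaRatio h (1 - s) := by
    filter_upwards [hcont.eventually_ne (mul_ne_zero hΓ₁ hΓ₂)] with s hs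
    exact Gamma_add_mul_Gamma_one_sub_add_mul_sin hs
  refine HasDerivAt.congr_of_eventuallyEq ?_ heq
  have hd := ((hasDerivAt_gammaRatio h₁).const_mul π).mul
    ((hasDerivAt_gammaRatio h₂).comp s ((hasDerivAt_id s).const_sub 1))
  refine hd.congr_deriv ?_
  simp only [Function.comp_apply]
  ring

theorem f_pos_and_deriv_neg
    (α τ : ℝ)
    (h : (0 < α ∧ α < 1 / 2 ∧ 0 < τ ∧ τ < α) ∨
         (0 < α ∧ α < 1 ∧ 2 * α < τ ∧ τ < 1 + α) ∨
         (0 < α ∧ α < 1 / 2 ∧ 1 + 2 * α < τ ∧ τ < 2)) :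
    0 < Real.Gamma (2 * α - τ) * Real.Gamma (τ + 1) * Real.sin (Real.pi * (α - τ)) ∧
      deriv (fun t : ℝ =>
          Real.Gamma (2 * α - t) * Real.Gamma (t + 1) * Real.sin (Real.pi * (α - t))) τ < 0 := by
  obtain ⟨hα, n, hn₀, hn₁, hn₂⟩ : 0 < α ∧ ∃ n : ℕ,
      0 < α - τ + n ∧ α - τ + α + n < 1 ∧ α - τ + n < 1 - (α - τ) := by
    rcases h with ⟨hα, hα', hτ, hτ'⟩ | ⟨hα, -, hτ, hτ'⟩ | ⟨hα, -, hτ, hτ'⟩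
    · exact ⟨hα, 0, by push_cast; refine ⟨?_, ?_, ?_⟩ <;> linarith⟩
    · exact ⟨hα, 1, by push_cast; refine ⟨?_, ?_, ?_⟩ <;> linarith⟩
    · exact ⟨hα, 2, by push_cast; refine ⟨?_, ?_, ?_⟩ <;> linarith⟩
  have hR₁ := gammaRatio_pos hα.le n hn₀ hn₁
  have hR₂ := gammaRatio_pos_of_pos hα.le (by linarith : 0 < 1 - (α - τ))
  have hD := digamma_add_sub_digamma_lt hα n hn₀ hn₁ hn₂
  have hf : HasDerivAt (fun t => Gamma (2 * α - t) * Gamma (t + 1) * sin (π * (α - t)))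
      (-(π * gammaRatio α (α - τ) * gammaRatio α (1 - (α - τ)) *
        (ψ (α - τ + α) - ψ (α - τ) - (ψ (1 - (α - τ) + α) - ψ (1 - (α - τ)))))) τ := by
    refine ((hasDerivAt_Gamma_mul_Gamma_mul_sin hR₁.ne' hR₂.ne').comp τ
      ((hasDerivAt_id τ).const_sub α)).congr_deriv (by ring) |>.congr_of_eventuallyEq
      (.of_forall fun t => ?_)
    simp only [Function.comp_apply]
    ring_nf
  have hval : Gamma (2 * α - τ) * Gamma (τ + 1) * sin (π * (α - τ)) =
      π * gammaRatio α (α - τ) * gammaRatio α (1 - (α - τ)) := by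
    rw [← Gamma_add_mul_Gamma_one_sub_add_mul_sin (mul_ne_zero
      (div_ne_zero_iff.1 hR₁.ne').2 (div_ne_zero_iff.1 hR₂.ne').2)]
    ring_nf
  rw [hf.deriv, hval]
  exact ⟨by positivity, neg_neg_of_pos (mul_pos (by positivity) (sub_pos.2 hD))⟩
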